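/- arXiv:0807.2596 — 7 statements merged into one kernel-verified Lean document; each statement's English description precedes it below -/
import Mathlib

section
/- Let a, b ∈ ℤ with b ≥ a + 2, and let L : ℤ × ℝ × ℝ → ℝ, written L(t,u,v), be such that for each t the map (u,v) ↦ L(t,u,v) is continuously differentiable. For y : ℤ → ℝ set 𝓛[y] = Σ_{t=a}^{b−1} L(t, y(t+1), (Δy)(t)). Suppose y* : ℤ → ℝ satisfies y*(a) = α, y*(b) = β, and is a local extremum: there exists δ > 0 such that 𝓛[y*] ≤ 𝓛[y] (or 𝓛[y*] ≥ 𝓛[y]) for every y : ℤ → ℝ with y(a) = α, y(b) = β and max_{a ≤ t ≤ b} |y(t) − y*(t)| < δ. Then for all t with a ≤ t ≤ b − 2: ∂L/∂v(t+1, y*(t+2), (Δy*)(t+1)) − ∂L/∂v(t, y*(t+1), (Δy*)(t)) = ∂L/∂u(t, y*(t+1), (Δy*)(t)). -/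
/-!
Perturb `y*` at the single interior point `t + 1` only: `w ↦ 𝓛[update y* (t+1) w]` is an
admissible one-parameter family, so it has a local extremum at `w = y*(t+1)`. Only the summands
with index `t` and `t + 1` see `w`, through `L(t, w, w − y*(t))` and
`L(t+1, y*(t+2), y*(t+2) − w)`, so the vanishing of its derivative there is exactly the
Euler–Lagrange equation at `t`.
-/

/-- The discrete (delta) Lagrangian functional
`𝓛[y] = Σ_{t=a}^{b−1} L(t, y(t+1), Δy(t))` on the time scale `T = ℤ`,
where `Δy(t) = y(t+1) − y(t)`. -/
noncomputable def deltaLagrangianFunctional (a b : ℤ) (L : ℤ → ℝ → ℝ → ℝ) (y : ℤ → ℝ) : ℝ :=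
  ∑ t ∈ Finset.Icc a (b - 1), L t (y (t + 1)) (y (t + 1) - y t)

open Function Filter Topology

section PartialDerivatives

variable {𝕜 F : Type*} [NontriviallyNormedField 𝕜] [NormedAddCommGroup F] [NormedSpace 𝕜 F]
  {f : 𝕜 × 𝕜 → F} {f' : 𝕜 × 𝕜 →L[𝕜] F}

theorem HasFDerivAt.deriv_fst_slice {p : 𝕜 × 𝕜} (hf : HasFDerivAt f f' p) :
    deriv (fun u => f (u, p.2)) p.1 = f' (1, 0) :=
  (hf.comp_hasDerivAt p.1 ((hasDerivAt_id p.1).prodMk (hasDerivAt_const p.1 p.2))).deriv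

theorem HasFDerivAt.deriv_snd_slice {p : 𝕜 × 𝕜} (hf : HasFDerivAt f f' p) :
    deriv (fun v => f (p.1, v)) p.2 = f' (0, 1) :=
  (hf.comp_hasDerivAt p.2 ((hasDerivAt_const p.2 p.1).prodMk (hasDerivAt_id p.2))).deriv

theorem HasFDerivAt.hasDerivAt_prodMk_self_sub {x c : 𝕜} (hf : HasFDerivAt f f' (x, x - c)) :
    HasDerivAt (fun w => f (w, w - c)) (f' (1, 0) + f' (0, 1)) x := by
  have hpath : HasDerivAt (fun w : 𝕜 => (w, w - c)) (1, 1) x :=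
    (hasDerivAt_id x).prodMk ((hasDerivAt_id x).sub_const c)
  rw [← map_add, Prod.mk_add_mk, add_zero, zero_add]
  exact hf.comp_hasDerivAt x hpath

theorem HasFDerivAt.hasDerivAt_prodMk_const_sub {x d e : 𝕜}
    (hf : HasFDerivAt f f' (d, e - x)) :
    HasDerivAt (fun w => f (d, e - w)) (-f' (0, 1)) x := by
  have hpath : HasDerivAt (fun w : 𝕜 => (d, e - w)) (0, -1) x :=
    (hasDerivAt_const x d).prodMk ((hasDerivAt_id x).const_sub e)
  rw [← map_neg, Prod.neg_mk, neg_zero]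
  exact hf.comp_hasDerivAt x hpath

end PartialDerivatives

theorem eventually_abs_update_sub_lt {ι : Type*} [DecidableEq ι] (y : ι → ℝ) (s : ι) {δ : ℝ}
    (hδ : 0 < δ) : ∀ᶠ w in 𝓝 (y s), ∀ t, |update y s w t - y t| < δ := by
  filter_upwards [eventually_abs_sub_lt (y s) hδ] with w hw t
  rcases eq_or_ne t s with rfl | hts
  · rwa [update_self]
  · rwa [update_of_ne hts, sub_self, abs_zero]

theorem isLocalExtr_comp_update {J : (ℤ → ℝ) → ℝ} {a b s : ℤ} (hsa : s ≠ a) (hsb : s ≠ b)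
    {α β δ : ℝ} {ystar : ℤ → ℝ} (ha : ystar a = α) (hb : ystar b = β) (hδ : 0 < δ)
    (hext : (∀ y : ℤ → ℝ, y a = α → y b = β →
        (∀ t : ℤ, a ≤ t → t ≤ b → |y t - ystar t| < δ) → J ystar ≤ J y) ∨
      (∀ y : ℤ → ℝ, y a = α → y b = β →
        (∀ t : ℤ, a ≤ t → t ≤ b → |y t - ystar t| < δ) → J y ≤ J ystar)) :
    IsLocalExtr (fun w => J (update ystar s w)) (ystar s) := by
  have hadm : ∀ᶠ w in 𝓝 (ystar s), update ystar s w a = α ∧ update ystar s w b = β ∧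
      ∀ t : ℤ, a ≤ t → t ≤ b → |update ystar s w t - ystar t| < δ := by
    filter_upwards [eventually_abs_update_sub_lt ystar s hδ] with w hw
    exact ⟨by rw [update_of_ne hsa.symm, ha], by rw [update_of_ne hsb.symm, hb],
      fun t _ _ => hw t⟩
  rcases hext with hmin | hmax
  · refine Or.inl (hadm.mono fun w ⟨hwa, hwb, hwδ⟩ => ?_)
    simpa only [update_eq_self] using hmin _ hwa hwb hwδ
  · refine Or.inr (hadm.mono fun w ⟨hwa, hwb, hwδ⟩ => ?_)
    simpa only [update_eq_self] using hmax _ hwa hwb hwδ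

theorem deltaLagrangianFunctional_update {a b t : ℤ} (hat : a ≤ t) (htb : t ≤ b - 2)
    (L : ℤ → ℝ → ℝ → ℝ) (y : ℤ → ℝ) (w : ℝ) :
    deltaLagrangianFunctional a b L (update y (t + 1) w) =
      deltaLagrangianFunctional a b L y
        + (L t w (w - y t) - L t (y (t + 1)) (y (t + 1) - y t))
        + (L (t + 1) (y (t + 2)) (y (t + 2) - w)
            - L (t + 1) (y (t + 2)) (y (t + 2) - y (t + 1))) := by
  set z := update y (t + 1) w
  have hdiff := Finset.sum_eq_add_of_mem (s := Finset.Icc a (b - 1)) t (t + 1)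
    (f := fun s => L s (z (s + 1)) (z (s + 1) - z s) - L s (y (s + 1)) (y (s + 1) - y s))
    (Finset.mem_Icc.2 ⟨hat, by omega⟩) (Finset.mem_Icc.2 ⟨by omega, by omega⟩) (by omega)
    fun s _ hs => by
      simp only [z, update_of_ne (by omega : s + 1 ≠ t + 1), update_of_ne hs.2, sub_self]
  have hnext : t + 1 + 1 = t + 2 := by ring
  simp only [Finset.sum_sub_distrib, z, update_self, update_of_ne (by omega : t ≠ t + 1),
    hnext, update_of_ne (by omega : t + 2 ≠ t + 1)] at hdiff
  unfold deltaLagrangianFunctional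
  linarith

theorem euler_lagrange_int_general (a b : ℤ) (L : ℤ → ℝ → ℝ → ℝ)
    (hL : ∀ t : ℤ, ContDiff ℝ 1 (fun p : ℝ × ℝ => L t p.1 p.2))
    (α β : ℝ) (ystar : ℤ → ℝ) (ha : ystar a = α) (hb : ystar b = β)
    (hext : ∃ δ > (0 : ℝ),
      (∀ y : ℤ → ℝ, y a = α → y b = β →
        (∀ t : ℤ, a ≤ t → t ≤ b → |y t - ystar t| < δ) →
        deltaLagrangianFunctional a b L ystar ≤ deltaLagrangianFunctional a b L y) ∨
      (∀ y : ℤ → ℝ, y a = α → y b = β →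
        (∀ t : ℤ, a ≤ t → t ≤ b → |y t - ystar t| < δ) →
        deltaLagrangianFunctional a b L y ≤ deltaLagrangianFunctional a b L ystar)) :
    ∀ t : ℤ, a ≤ t → t ≤ b - 2 →
      deriv (fun v => L (t + 1) (ystar (t + 2)) v) (ystar (t + 2) - ystar (t + 1)) -
        deriv (fun v => L t (ystar (t + 1)) v) (ystar (t + 1) - ystar t) =
      deriv (fun u => L t u (ystar (t + 1) - ystar t)) (ystar (t + 1)) := by
  intro t hat htb
  obtain ⟨δ, hδ, hext⟩ := hext
  have hD : ∀ s p, ∃ D, HasFDerivAt (fun p : ℝ × ℝ => L s p.1 p.2) D p := fun s p =>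
    ⟨_, ((hL s).differentiable one_ne_zero p).hasFDerivAt⟩
  obtain ⟨D₀, hD₀⟩ := hD t (ystar (t + 1), ystar (t + 1) - ystar t)
  obtain ⟨D₁, hD₁⟩ := hD (t + 1) (ystar (t + 2), ystar (t + 2) - ystar (t + 1))
  have hvar : HasDerivAt (fun w => deltaLagrangianFunctional a b L (update ystar (t + 1) w))
      (D₀ (1, 0) + D₀ (0, 1) + -D₁ (0, 1)) (ystar (t + 1)) := by
    rw [funext (deltaLagrangianFunctional_update hat htb L ystar)]
    exact ((hD₀.hasDerivAt_prodMk_self_sub.sub_const _).const_add _).add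
      (hD₁.hasDerivAt_prodMk_const_sub.sub_const _)
  have hextr := isLocalExtr_comp_update (s := t + 1) (by omega) (by omega) ha hb hδ hext
  have hzero := hextr.hasDerivAt_eq_zero hvar
  rw [hD₀.deriv_fst_slice, hD₀.deriv_snd_slice, hD₁.deriv_snd_slice]
  linarith

/-- Bohner's Euler-Lagrange equation on the time scale `T = ℤ`: if for each `t` the map
`(u,v) ↦ L(t,u,v)` is `C¹` and `y*` is a local extremum of
`𝓛[y] = Σ_{t=a}^{b−1} L(t, y(t+1), Δy(t))` among functions with `y(a) = α`, `y(b) = β`,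
then for `a ≤ t ≤ b−2`:
`∂L/∂v(t+1, y*(t+2), Δy*(t+1)) − ∂L/∂v(t, y*(t+1), Δy*(t)) = ∂L/∂u(t, y*(t+1), Δy*(t))`. -/
theorem euler_lagrange_int (a b : ℤ) (hab : a + 2 ≤ b) (L : ℤ → ℝ → ℝ → ℝ)
    (hL : ∀ t : ℤ, ContDiff ℝ 1 (fun p : ℝ × ℝ => L t p.1 p.2))
    (α β : ℝ) (ystar : ℤ → ℝ) (ha : ystar a = α) (hb : ystar b = β)
    (hext : ∃ δ > (0 : ℝ),
      (∀ y : ℤ → ℝ, y a = α → y b = β →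
        (∀ t : ℤ, a ≤ t → t ≤ b → |y t - ystar t| < δ) →
        deltaLagrangianFunctional a b L ystar ≤ deltaLagrangianFunctional a b L y) ∨
      (∀ y : ℤ → ℝ, y a = α → y b = β →
        (∀ t : ℤ, a ≤ t → t ≤ b → |y t - ystar t| < δ) →
        deltaLagrangianFunctional a b L y ≤ deltaLagrangianFunctional a b L ystar)) :
    ∀ t : ℤ, a ≤ t → t ≤ b - 2 →
      deriv (fun v => L (t + 1) (ystar (t + 2)) v) (ystar (t + 2) - ystar (t + 1)) -
        deriv (fun v => L t (ystar (t + 1)) v) (ystar (t + 1) - ystar t) =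
      deriv (fun u => L t u (ystar (t + 1) - ystar t)) (ystar (t + 1)) :=
  euler_lagrange_int_general a b L hL α β ystar ha hb hext
end

section
/- Let a, b ∈ ℤ with a < b and let f : ℤ → ℝ. If Σ_{t=a+1}^{b} f(t)·(η(t) − η(t−1)) = 0 for every function η : ℤ → ℝ with η(a) = η(b) = 0, then there exists c ∈ ℝ such that f(t) = c for all t with a + 1 ≤ t ≤ b. -/
/-!
Choosing for `η` the indicator of `[t, b)` with `a < t < b`, its backward difference is
`δ_t - δ_b`, so the hypothesis collapses to `f t - f b = 0`.
-/

def nabla {R : Type*} [Sub R] (η : ℤ → R) (t : ℤ) : R := η t - η (t - 1)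

lemma nabla_indicator_Ico {R : Type*} [AddGroupWithOne R] {t b : ℤ} (htb : t ≤ b) (x : ℤ) :
    nabla ((Set.Ico t b).indicator 1) x =
      (if x = t then (1 : R) else 0) - (if x = b then 1 else 0) := by
  unfold nabla
  simp only [Set.indicator_apply, Set.mem_Ico, Pi.one_apply]
  split_ifs <;> first | omega | simp

lemma sum_mul_nabla_indicator_Ico {R : Type*} [CommRing R] (f : ℤ → R) {s : Finset ℤ}
    {t b : ℤ} (htb : t ≤ b) (ht : t ∈ s) (hb : b ∈ s) :
    ∑ x ∈ s, f x * nabla ((Set.Ico t b).indicator 1) x = f t - f b := by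
  simp only [nabla_indicator_Ico htb, mul_sub, mul_ite, mul_one, mul_zero,
    Finset.sum_sub_distrib, Finset.sum_ite_eq', ht, hb, if_true]

theorem fundamental_lemma_constancy_int_general (a b : ℤ) (f : ℤ → ℝ)
    (h : ∀ η : ℤ → ℝ, η a = 0 → η b = 0 →
      ∑ t ∈ Finset.Icc (a + 1) b, f t * (η t - η (t - 1)) = 0) :
    ∃ c : ℝ, ∀ t : ℤ, a + 1 ≤ t → t ≤ b → f t = c := by
  refine ⟨f b, fun t hat htb => ?_⟩
  obtain rfl | htb := htb.eq_or_lt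
  · rfl
  have hη := h ((Set.Ico t b).indicator 1)
    (Set.indicator_of_notMem (by simp only [Set.mem_Ico]; omega) _)
    (Set.indicator_of_notMem (by simp) _)
  rw [← sub_eq_zero, ← hη]
  exact (sum_mul_nabla_indicator_Ico f htb.le (Finset.mem_Icc.2 ⟨hat, htb.le⟩)
    (Finset.mem_Icc.2 ⟨by omega, le_rfl⟩)).symm

/-- Fundamental constancy lemma of the nabla calculus of variations on `T = ℤ`:
if `Σ_{t=a+1}^{b} f(t)·(∇η)(t) = 0` for every `η : ℤ → ℝ` with `η(a) = η(b) = 0`,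
where `(∇η)(t) = η(t) − η(t−1)`, then `f` is constant on `{a+1, …, b}`. -/
theorem fundamental_lemma_constancy_int (a b : ℤ) (hab : a < b) (f : ℤ → ℝ)
    (h : ∀ η : ℤ → ℝ, η a = 0 → η b = 0 →
      ∑ t ∈ Finset.Icc (a + 1) b, f t * (η t - η (t - 1)) = 0) :
    ∃ c : ℝ, ∀ t : ℤ, a + 1 ≤ t → t ≤ b → f t = c :=
  fundamental_lemma_constancy_int_general a b f h
end

section
/- Let a, b ∈ ℤ with b ≥ a + 2 and let f, g : ℤ → ℝ. If Σ_{t=a+1}^{b} ( f(t)·η(t−1) + g(t)·(η(t) − η(t−1)) ) = 0 for every function η : ℤ → ℝ with η(a) = η(b) = 0, then g(t) − g(t−1) = f(t) for all t with a + 2 ≤ t ≤ b. -/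
/-!
Testing the hypothesis against the unit pulse at `t - 1`, which vanishes at both endpoints,
leaves only the summands at `t - 1` and `t`; together they equal `f t - (g t - g (t - 1))`.
-/

open Finset

/-- The nabla first variation on `ℤ`: `∫_a^b (f η^ρ + g ∇η)(t) ∇t`. -/
noncomputable def nablaFirstVariation (a b : ℤ) (f g η : ℤ → ℝ) : ℝ :=
  ∑ t ∈ Icc (a + 1) b, (f t * η (t - 1) + g t * (η t - η (t - 1)))

theorem nablaFirstVariation_single_one (a b s : ℤ) (has : a < s) (hsb : s < b) (f g : ℤ → ℝ) :
    nablaFirstVariation a b f g (Pi.single s 1) = f (s + 1) - (g (s + 1) - g s) := by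
  have hs : s ∈ Icc (a + 1) b := mem_Icc.2 ⟨by omega, by omega⟩
  have hs' : s + 1 ∈ Icc (a + 1) b := mem_Icc.2 ⟨by omega, by omega⟩
  have hvanish : ∀ t ∈ Icc (a + 1) b, t ≠ s ∧ t ≠ s + 1 →
      f t * (Pi.single s 1 : ℤ → ℝ) (t - 1)
        + g t * ((Pi.single s 1 : ℤ → ℝ) t - (Pi.single s 1 : ℤ → ℝ) (t - 1)) = 0 := by
    intro t _ ⟨hts, hts'⟩
    simp [hts, show t - 1 ≠ s by omega]
  rw [nablaFirstVariation, sum_eq_add_of_mem s (s + 1) hs hs' (by omega) hvanish,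
    add_sub_cancel_right, Pi.single_eq_same, Pi.single_eq_of_ne (by omega : s - 1 ≠ s),
    Pi.single_eq_of_ne (by omega : s + 1 ≠ s)]
  ring

theorem fundamental_lemma_duBoisReymond_int_general (a b : ℤ) (f g : ℤ → ℝ)
    (h : ∀ η : ℤ → ℝ, η a = 0 → η b = 0 →
      ∑ t ∈ Finset.Icc (a + 1) b, (f t * η (t - 1) + g t * (η t - η (t - 1))) = 0) :
    ∀ t : ℤ, a + 2 ≤ t → t ≤ b → g t - g (t - 1) = f t := by
  intro t hat htb
  have hpulse := h (Pi.single (t - 1) 1) (Pi.single_eq_of_ne (by omega) 1)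
    (Pi.single_eq_of_ne (by omega) 1)
  rw [← nablaFirstVariation, nablaFirstVariation_single_one a b (t - 1) (by omega) (by omega),
    sub_add_cancel] at hpulse
  linarith

/-- du Bois-Reymond fundamental lemma of the nabla calculus of variations on `T = ℤ`:
if `Σ_{t=a+1}^{b} ( f(t)·η(t−1) + g(t)·(∇η)(t) ) = 0` for every `η : ℤ → ℝ` with
`η(a) = η(b) = 0`, where `(∇η)(t) = η(t) − η(t−1)`, then `(∇g)(t) = f(t)` for
`a+2 ≤ t ≤ b`. -/
theorem fundamental_lemma_duBoisReymond_int (a b : ℤ) (hab : a + 2 ≤ b) (f g : ℤ → ℝ)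
    (h : ∀ η : ℤ → ℝ, η a = 0 → η b = 0 →
      ∑ t ∈ Finset.Icc (a + 1) b, (f t * η (t - 1) + g t * (η t - η (t - 1))) = 0) :
    ∀ t : ℤ, a + 2 ≤ t → t ≤ b → g t - g (t - 1) = f t :=
  fundamental_lemma_duBoisReymond_int_general a b f g h
end

section
/- Let r ≥ 1 be a natural number, a, b ∈ ℤ with b ≥ a + 2r, and let L : ℤ × ℝ^{r+1} → ℝ, written L(t, u_0, …, u_r), be such that for each t the map (u_0, …, u_r) ↦ L(t, u_0, …, u_r) is continuously differentiable. For y : ℤ → ℝ set 𝓛[y] = Σ_{t=a+r}^{b} L(t, y(t−r), (∇y)(t−r+1), …, (∇^{r−1}y)(t−1), (∇^r y)(t)). Suppose y* : ℤ → ℝ satisfies the boundary conditions (∇^i y*)(a + r − 1) = α_i and (∇^i y*)(b) = β_i for i = 0, …, r − 1, and is a weak local extremum: there exists δ > 0 such that 𝓛[y*] ≤ 𝓛[y] (or 𝓛[y*] ≥ 𝓛[y]) for every y : ℤ → ℝ satisfying the same boundary conditions with max_{a ≤ t ≤ b} |y(t) − y*(t)| < δ. Then, setting g_i(t) = ∂L/∂u_i(t,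 y*(t−r), (∇y*)(t−r+1), …, (∇^r y*)(t)), one has Σ_{i=0}^{r} (−1)^i (∇^i g_i)(t) = 0 for all t with a + 2r ≤ t ≤ b. -/
/-!
Perturb `y*` by `ε` times the unit impulse `δ` at `t − r`. The differences `∇ⁱδ`, `i < r`, vanish
at `a + r − 1` and at `b`, so every perturbation is admissible, and `ε ↦ 𝓛[y* + εδ]` has a local
extremum at `0`; its derivative there, `Σₛ Σᵢ gᵢ(s) (∇ⁱδ)(s − r + i)`, therefore vanishes. Summing
by parts against the impulse turns the `i`-th inner sum into `(−1)ⁱ (∇ⁱgᵢ)(t)`.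
-/

/-- The backward difference (nabla derivative) on the time scale `T = ℤ`:
`(∇f)(t) = f(t) − f(t−1)`. -/
def intNabla (f : ℤ → ℝ) : ℤ → ℝ := fun t => f t - f (t - 1)

/-- The higher-order nabla Lagrangian functional on `T = ℤ`:
`𝓛[y] = Σ_{t=a+r}^{b} L(t, y(t−r), (∇y)(t−r+1), …, (∇^{r−1}y)(t−1), (∇ʳy)(t))`. -/
noncomputable def intNablaLagrangianFunctional (r : ℕ) (a b : ℤ)
    (L : ℤ → (Fin (r + 1) → ℝ) → ℝ) (y : ℤ → ℝ) : ℝ :=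
  ∑ t ∈ Finset.Icc (a + (r : ℤ)) b,
    L t (fun i : Fin (r + 1) => intNabla^[(i : ℕ)] y (t - ((r : ℤ) - ((i : ℕ) : ℤ))))


open Finset Filter Topology

def intNablaₗ : Module.End ℝ (ℤ → ℝ) where
  toFun := intNabla
  map_add' f g := by ext t; simp only [intNabla, Pi.add_apply]; ring
  map_smul' c f := by
    ext t
    simp only [intNabla, Pi.smul_apply, smul_eq_mul, RingHom.id_apply]
    ring

lemma coe_intNablaₗ_pow (i : ℕ) : ⇑(intNablaₗ ^ i) = intNabla^[i] :=
  Module.End.coe_pow _ _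

lemma intNabla_iterate_add_smul (f g : ℤ → ℝ) (c : ℝ) (i : ℕ) :
    intNabla^[i] (f + c • g) = intNabla^[i] f + c • intNabla^[i] g := by
  rw [← coe_intNablaₗ_pow, map_add, map_smul]

lemma intNabla_iterate_sub (f g : ℤ → ℝ) (i : ℕ) :
    intNabla^[i] (f - g) = intNabla^[i] f - intNabla^[i] g := by
  rw [← coe_intNablaₗ_pow, map_sub]

lemma intNabla_iterate_apply_eq_zero {f : ℤ → ℝ} {i : ℕ} {s : ℤ}
    (hf : ∀ k ≤ i, f (s - k) = 0) : intNabla^[i] f s = 0 := by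
  induction i generalizing s with
  | zero => simpa using hf 0 le_rfl
  | succ i ih =>
    have h₀ : intNabla^[i] f s = 0 := ih fun k hk => hf k (by omega)
    have h₁ : intNabla^[i] f (s - 1) = 0 := ih fun k hk => by
      simpa [sub_sub, add_comm] using hf (k + 1) (by omega)
    rw [Function.iterate_succ_apply', intNabla, h₀, h₁, sub_zero]

lemma intNabla_iterate_single_apply_eq_zero {c s : ℤ} {i : ℕ} (h : s < c ∨ c + i < s) :
    intNabla^[i] (Pi.single c 1) s = 0 :=
  intNabla_iterate_apply_eq_zero fun k hk => Pi.single_eq_of_ne (by omega) _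

lemma intNabla_single (c : ℤ) :
    intNabla (Pi.single c 1) = Pi.single c 1 - Pi.single (c + 1) 1 := by
  ext t
  simp only [intNabla, Pi.sub_apply, Pi.single_apply, sub_eq_iff_eq_add]

lemma sum_intNabla_iterate_single_mul (g : ℤ → ℝ) {lo hi c m : ℤ} {i : ℕ}
    (hlo : lo ≤ c + m) (hhi : c + m + i ≤ hi) :
    ∑ t ∈ Icc lo hi, intNabla^[i] (Pi.single c 1) (t - m) * g t =
      (-1) ^ i * intNabla^[i] g (c + m + i) := by
  induction i generalizing c with
  | zero =>
    simp only [Function.iterate_zero, id, pow_zero, one_mul, Nat.cast_zero, add_zero]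
    rw [sum_eq_single_of_mem (c + m) (mem_Icc.2 ⟨hlo, by simpa using hhi⟩)]
    · simp
    · intro t _ ht
      simp [show t - m ≠ c by omega]
  | succ i ih =>
    push_cast at hhi
    rw [Function.iterate_succ_apply, intNabla_single, intNabla_iterate_sub]
    simp only [Pi.sub_apply, sub_mul, sum_sub_distrib]
    rw [ih (by omega) (by omega), ih (c := c + 1) (by omega) (by omega),
      Function.iterate_succ_apply' _ _ g, intNabla]
    rw [show c + 1 + m + i = c + m + ↑(i + 1) by push_cast; ring,
      show c + m + ↑(i + 1) - 1 = c + m + i by push_cast; ring]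
    ring

section PartialDerivatives

variable {𝕜 ι E : Type*} [NontriviallyNormedField 𝕜] [Fintype ι] [DecidableEq ι]
  [NormedAddCommGroup E] [NormedSpace 𝕜 E] {F : (ι → 𝕜) → E} {u : ι → 𝕜}

lemma deriv_update_eq_fderiv_single (hF : DifferentiableAt 𝕜 F u) (i : ι) :
    deriv (fun z => F (Function.update u i z)) (u i) = fderiv 𝕜 F u (Pi.single i 1) := by
  have h := hF.hasFDerivAt.comp_hasDerivAt_of_eq (u i) (hasFDerivAt_update u (u i)).hasDerivAt
    (Function.update_eq_self i u).symm
  refine h.deriv.trans (congrArg _ ?_)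
  ext j
  rcases eq_or_ne j i with rfl | hj <;> simp [*]

lemma fderiv_apply_eq_sum_smul_deriv_update (hF : DifferentiableAt 𝕜 F u) (v : ι → 𝕜) :
    fderiv 𝕜 F u v = ∑ i, v i • deriv (fun z => F (Function.update u i z)) (u i) := by
  conv_lhs => rw [← Finset.univ_sum_single v]
  simp only [map_sum, deriv_update_eq_fderiv_single hF]
  refine sum_congr rfl fun i _ => ?_
  rw [← map_smul, ← Pi.single_smul, smul_eq_mul, mul_one]

end PartialDerivatives

/-- The paper's `(y^{ρ^{r−i}∇^i}(t))ᵢ`, the argument of `L t` in `𝓛[y]`. -/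
def intNablaJet (r : ℕ) (y : ℤ → ℝ) (t : ℤ) : Fin (r + 1) → ℝ :=
  fun i => intNabla^[i] y (t - (r - i))

lemma intNablaJet_add_smul (r : ℕ) (y d : ℤ → ℝ) (ε : ℝ) (t : ℤ) :
    intNablaJet r (y + ε • d) t = intNablaJet r y t + ε • intNablaJet r d t := by
  ext i
  simp [intNablaJet, intNabla_iterate_add_smul]

lemma hasDerivAt_intNablaLagrangianFunctional_add_smul {r : ℕ} {a b : ℤ}
    {L : ℤ → (Fin (r + 1) → ℝ) → ℝ} {y : ℤ → ℝ} (d : ℤ → ℝ)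
    (hL : ∀ t, DifferentiableAt ℝ (L t) (intNablaJet r y t)) :
    HasDerivAt (fun ε : ℝ => intNablaLagrangianFunctional r a b L (y + ε • d))
      (∑ t ∈ Icc (a + (r : ℤ)) b, fderiv ℝ (L t) (intNablaJet r y t) (intNablaJet r d t)) 0 := by
  change HasDerivAt
    (fun ε : ℝ => ∑ t ∈ Icc (a + (r : ℤ)) b, L t (intNablaJet r (y + ε • d) t)) _ 0
  simp only [intNablaJet_add_smul]
  refine HasDerivAt.fun_sum fun t _ => (hL t).hasFDerivAt.comp_hasDerivAt_of_eq 0 ?_ (by simp)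
  simpa using ((hasDerivAt_id (0 : ℝ)).smul_const (intNablaJet r d t)).const_add (intNablaJet r y t)

lemma sum_fderiv_intNablaJet_single {r : ℕ} {a b t : ℤ} {L : ℤ → (Fin (r + 1) → ℝ) → ℝ}
    {y : ℤ → ℝ} (hL : ∀ s, DifferentiableAt ℝ (L s) (intNablaJet r y s))
    (hat : a + 2 * (r : ℤ) ≤ t) (htb : t ≤ b) :
    ∑ s ∈ Icc (a + (r : ℤ)) b,
        fderiv ℝ (L s) (intNablaJet r y s) (intNablaJet r (Pi.single (t - r) 1) s) =
      ∑ i : Fin (r + 1), (-1) ^ (i : ℕ) * intNabla^[i]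
        (fun s => deriv (fun z => L s (Function.update (intNablaJet r y s) i z))
          (intNablaJet r y s i)) t := by
  simp only [fderiv_apply_eq_sum_smul_deriv_update (hL _), smul_eq_mul]
  rw [sum_comm]
  refine sum_congr rfl fun i _ => ?_
  have hi : (i : ℤ) ≤ r := by exact_mod_cast i.is_le
  have key := sum_intNabla_iterate_single_mul
    (fun s => deriv (fun z => L s (Function.update (intNablaJet r y s) i z)) (intNablaJet r y s i))
    (lo := a + r) (hi := b) (c := t - r) (m := r - i) (i := i) (by omega) (by omega)
  rwa [sub_add_sub_cancel, sub_add_cancel] at key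

lemma eventually_abs_add_smul_sub_lt (y d : ℤ → ℝ) (a b : ℤ) {δ : ℝ} (hδ : 0 < δ) :
    ∀ᶠ ε in 𝓝 (0 : ℝ), ∀ t, a ≤ t → t ≤ b → |(y + ε • d) t - y t| < δ := by
  have h : ∀ᶠ ε in 𝓝 (0 : ℝ), ∀ t ∈ Icc a b, |ε * d t| < δ :=
    (eventually_all_finset _).2 fun t _ =>
      ((continuous_id.mul continuous_const).abs.tendsto' 0 0 (by simp)).eventually_lt_const hδ
  filter_upwards [h] with ε hε t hat htb
  simpa using hε t (mem_Icc.2 ⟨hat, htb⟩)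

theorem euler_lagrange_higher_order_int_general (r : ℕ) (a b : ℤ)
    (L : ℤ → (Fin (r + 1) → ℝ) → ℝ)
    (hL : ∀ t : ℤ, ContDiff ℝ 1 (L t))
    (α β : ℕ → ℝ) (ystar : ℤ → ℝ)
    (hbc : ∀ i < r, intNabla^[i] ystar (a + (r : ℤ) - 1) = α i ∧
                    intNabla^[i] ystar b = β i)
    (hext : ∃ δ > (0 : ℝ),
      (∀ y : ℤ → ℝ,
        (∀ i < r, intNabla^[i] y (a + (r : ℤ) - 1) = α i ∧ intNabla^[i] y b = β i) →
        (∀ t : ℤ, a ≤ t → t ≤ b → |y t - ystar t| < δ) →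
        intNablaLagrangianFunctional r a b L ystar ≤
          intNablaLagrangianFunctional r a b L y) ∨
      (∀ y : ℤ → ℝ,
        (∀ i < r, intNabla^[i] y (a + (r : ℤ) - 1) = α i ∧ intNabla^[i] y b = β i) →
        (∀ t : ℤ, a ≤ t → t ≤ b → |y t - ystar t| < δ) →
        intNablaLagrangianFunctional r a b L y ≤
          intNablaLagrangianFunctional r a b L ystar)) :
    ∀ t : ℤ, a + 2 * (r : ℤ) ≤ t → t ≤ b →
      ∑ i : Fin (r + 1), (-1 : ℝ) ^ (i : ℕ) *
        intNabla^[(i : ℕ)]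
          (fun s => deriv
            (fun z => L s (Function.update
              (fun j : Fin (r + 1) =>
                intNabla^[(j : ℕ)] ystar (s - ((r : ℤ) - ((j : ℕ) : ℤ)))) i z))
            (intNabla^[(i : ℕ)] ystar (s - ((r : ℤ) - ((i : ℕ) : ℤ))))) t = 0 := by
  intro t hat htb
  obtain ⟨δ, hδ, hext⟩ := hext
  set d : ℤ → ℝ := Pi.single (t - r) 1
  have hdiff (s : ℤ) : DifferentiableAt ℝ (L s) (intNablaJet r ystar s) :=
    (hL s).differentiable one_ne_zero _
  have hadm (ε : ℝ) : ∀ i < r, intNabla^[i] (ystar + ε • d) (a + (r : ℤ) - 1) = α i ∧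
      intNabla^[i] (ystar + ε • d) b = β i := fun i hi => by
    have hd₀ : intNabla^[i] d (a + r - 1) = 0 :=
      intNabla_iterate_single_apply_eq_zero (.inl (by omega))
    have hd₁ : intNabla^[i] d b = 0 := intNabla_iterate_single_apply_eq_zero (.inr (by omega))
    simp [intNabla_iterate_add_smul, hd₀, hd₁, hbc i hi]
  have hnear := eventually_abs_add_smul_sub_lt ystar d a b hδ
  have hderiv := hasDerivAt_intNablaLagrangianFunctional_add_smul (a := a) (b := b) d hdiff
  suffices h : ∑ s ∈ Icc (a + (r : ℤ)) b,
      fderiv ℝ (L s) (intNablaJet r ystar s) (intNablaJet r d s) = 0 by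
    rwa [sum_fderiv_intNablaJet_single hdiff hat htb] at h
  rcases hext with hmin | hmax
  · refine IsLocalMin.hasDerivAt_eq_zero ?_ hderiv
    filter_upwards [hnear] with ε hε
    simpa using hmin _ (hadm ε) hε
  · refine IsLocalMax.hasDerivAt_eq_zero ?_ hderiv
    filter_upwards [hnear] with ε hε
    simpa using hmax _ (hadm ε) hε

/-- Euler-Lagrange equation for the higher-order nabla variational problem (P)
on the time scale `T = ℤ`: if for each `t` the map `(u₀,…,u_r) ↦ L(t,u₀,…,u_r)` is
`C¹` and `y*` is a weak local extremum of `𝓛` subject to the boundary conditions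
`(∇ⁱy)(a+r−1) = αᵢ`, `(∇ⁱy)(b) = βᵢ` (`i = 0,…,r−1`), then, with
`gᵢ(t) = ∂L/∂uᵢ(t, y*(t−r), (∇y*)(t−r+1), …, (∇ʳy*)(t))`, one has
`Σ_{i=0}^{r} (−1)ⁱ (∇ⁱgᵢ)(t) = 0` for all `a+2r ≤ t ≤ b`. -/
theorem euler_lagrange_higher_order_int (r : ℕ) (hr : 1 ≤ r) (a b : ℤ)
    (hab : a + 2 * (r : ℤ) ≤ b) (L : ℤ → (Fin (r + 1) → ℝ) → ℝ)
    (hL : ∀ t : ℤ, ContDiff ℝ 1 (L t))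
    (α β : ℕ → ℝ) (ystar : ℤ → ℝ)
    (hbc : ∀ i < r, intNabla^[i] ystar (a + (r : ℤ) - 1) = α i ∧
                    intNabla^[i] ystar b = β i)
    (hext : ∃ δ > (0 : ℝ),
      (∀ y : ℤ → ℝ,
        (∀ i < r, intNabla^[i] y (a + (r : ℤ) - 1) = α i ∧ intNabla^[i] y b = β i) →
        (∀ t : ℤ, a ≤ t → t ≤ b → |y t - ystar t| < δ) →
        intNablaLagrangianFunctional r a b L ystar ≤
          intNablaLagrangianFunctional r a b L y) ∨
      (∀ y : ℤ → ℝ,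
        (∀ i < r, intNabla^[i] y (a + (r : ℤ) - 1) = α i ∧ intNabla^[i] y b = β i) →
        (∀ t : ℤ, a ≤ t → t ≤ b → |y t - ystar t| < δ) →
        intNablaLagrangianFunctional r a b L y ≤
          intNablaLagrangianFunctional r a b L ystar)) :
    ∀ t : ℤ, a + 2 * (r : ℤ) ≤ t → t ≤ b →
      ∑ i : Fin (r + 1), (-1 : ℝ) ^ (i : ℕ) *
        intNabla^[(i : ℕ)]
          (fun s => deriv
            (fun z => L s (Function.update
              (fun j : Fin (r + 1) =>
                intNabla^[(j : ℕ)] ystar (s - ((r : ℤ) - ((j : ℕ) : ℤ)))) i z))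
            (intNabla^[(i : ℕ)] ystar (s - ((r : ℤ) - ((i : ℕ) : ℤ))))) t = 0 :=
  euler_lagrange_higher_order_int_general r a b L hL α β ystar hbc hext
end

section
/- Fix a real q > 1 and natural numbers m < n. Let f : ℕ → ℝ. If Σ_{k=m+1}^{n} (q^k − q^{k−1})·f(k)·(Dη)(k) = 0 for every function η : ℕ → ℝ with η(m) = η(n) = 0, then there exists c ∈ ℝ such that f(k) = c for all k with m + 1 ≤ k ≤ n. -/
/-- The nabla derivative on the time scale `q^ℕ₀` (encoded by indices `k ∈ ℕ`):
`(Df)(k) = (f(k) − f(k−1)) / (q^k − q^{k−1})`. -/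
noncomputable def qNabla (q : ℝ) (f : ℕ → ℝ) : ℕ → ℝ :=
  fun k => (f k - f (k - 1)) / (q ^ k - q ^ (k - 1))

/-!
Multiplying the nabla derivative by the graininess `q^k − q^{k−1}` turns the hypothesis into the
purely discrete statement `Σ_{k=m+1}^{n} f(k) (η(k) − η(k−1)) = 0`. Testing it against the step
function `η = 1` on `[j, n)`, whose backward difference is `+1` at `j` and `−1` at `n`, gives
`f(j) = f(n)`.
-/

theorem pow_sub_pow_pred_ne_zero {q : ℝ} (hq₀ : q ≠ 0) (hq₁ : q ≠ 1) {k : ℕ} (hk : k ≠ 0) :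
    q ^ k - q ^ (k - 1) ≠ 0 := by
  obtain ⟨k, rfl⟩ := Nat.exists_eq_succ_of_ne_zero hk
  rw [Nat.succ_sub_one, pow_succ, ← mul_sub_one]
  exact mul_ne_zero (pow_ne_zero k hq₀) (sub_ne_zero.mpr hq₁)

theorem pow_sub_pow_pred_mul_qNabla {q : ℝ} (hq₀ : q ≠ 0) (hq₁ : q ≠ 1) (η : ℕ → ℝ) {k : ℕ}
    (hk : k ≠ 0) : (q ^ k - q ^ (k - 1)) * qNabla q η k = η k - η (k - 1) :=
  mul_div_cancel₀ _ (pow_sub_pow_pred_ne_zero hq₀ hq₁ hk)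

section Discrete

variable {R : Type*} [Ring R]

theorem ite_mem_Ico_sub_ite_pred_mem_Ico {j n k : ℕ} (hk : k ≠ 0) (hjn : j ≤ n) :
    ((if k ∈ Set.Ico j n then (1 : R) else 0) - if k - 1 ∈ Set.Ico j n then 1 else 0) =
      (if k = j then 1 else 0) - if k = n then 1 else 0 := by
  simp only [Set.mem_Ico]
  split_ifs <;> first | (exfalso; omega) | simp

theorem eq_of_forall_sum_mul_sub_pred_eq_zero {m n : ℕ} {f : ℕ → R}
    (h : ∀ η : ℕ → R, η m = 0 → η n = 0 →
      ∑ k ∈ Finset.Icc (m + 1) n, f k * (η k - η (k - 1)) = 0)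
    {j : ℕ} (hmj : m + 1 ≤ j) (hjn : j ≤ n) : f j = f n := by
  have hstep := h (fun k => if k ∈ Set.Ico j n then 1 else 0)
    (by simp only [Set.mem_Ico]; rw [if_neg (by omega)]) (by simp)
  rw [Finset.sum_congr rfl fun k hk => by
    rw [ite_mem_Ico_sub_ite_pred_mem_Ico (by simp at hk; omega) hjn]] at hstep
  simpa [mul_sub, Finset.sum_sub_distrib, hmj, hjn, show m < n by omega, sub_eq_zero] using hstep

end Discrete

theorem fundamental_lemma_constancy_qscale_general (q : ℝ) (hq : 1 < q) (m n : ℕ)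
    (f : ℕ → ℝ)
    (h : ∀ η : ℕ → ℝ, η m = 0 → η n = 0 →
      ∑ k ∈ Finset.Icc (m + 1) n, (q ^ k - q ^ (k - 1)) * f k * qNabla q η k = 0) :
    ∃ c : ℝ, ∀ k : ℕ, m + 1 ≤ k → k ≤ n → f k = c := by
  refine ⟨f n, fun j hmj hjn =>
    eq_of_forall_sum_mul_sub_pred_eq_zero (fun η hηm hηn => ?_) hmj hjn⟩
  rw [← h η hηm hηn]
  refine Finset.sum_congr rfl fun k hk => ?_
  have hk₀ : k ≠ 0 := by simp only [Finset.mem_Icc] at hk; omega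
  rw [mul_right_comm, pow_sub_pow_pred_mul_qNabla (zero_lt_one.trans hq).ne' hq.ne' η hk₀, mul_comm]

/-- Fundamental constancy lemma of the nabla calculus of variations on the q-scale:
if `Σ_{k=m+1}^{n} (q^k − q^{k−1})·f(k)·(Dη)(k) = 0` for every `η : ℕ → ℝ` with
`η(m) = η(n) = 0`, then `f` is constant on `{m+1, …, n}`. -/
theorem fundamental_lemma_constancy_qscale (q : ℝ) (hq : 1 < q) (m n : ℕ) (hmn : m < n)
    (f : ℕ → ℝ)
    (h : ∀ η : ℕ → ℝ, η m = 0 → η n = 0 →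
      ∑ k ∈ Finset.Icc (m + 1) n, (q ^ k - q ^ (k - 1)) * f k * qNabla q η k = 0) :
    ∃ c : ℝ, ∀ k : ℕ, m + 1 ≤ k → k ≤ n → f k = c :=
  fundamental_lemma_constancy_qscale_general q hq m n f h
end

section
/- Fix a real q > 1, a natural number r ≥ 1, and natural numbers m, n with n ≥ m + 2r. Let L : ℝ × ℝ^{r+1} → ℝ, written L(t, u_0, …, u_r), be such that for each t the map (u_0, …, u_r) ↦ L(t, u_0, …, u_r) is continuously differentiable. For y : ℕ → ℝ and j ∈ ℕ write y_{(j)} for the shifted function y_{(j)}(k) = y(k − j), and set 𝓛[y] = Σ_{k=m+r}^{n} (q^k − q^{k−1})·L(q^k, (D^0 y_{(r)})(k), (D^1 y_{(r−1)})(k), …, (D^{r−1} y_{(1)})(k), (D^r y_{(0)})(k)). Suppose y* : ℕ → ℝ satisfies the boundary conditions (D^i y*)(m + r − 1) = α_i and (D^i y*)(n) = β_i for i = 0, …, r − 1, and is a weak local extremum: there exists δ > 0 such that 𝓛[y*] ≤ 𝓛[y] (or 𝓛[y*] ≥ 𝓛[y]) for every y satisfying the same boundary conditions with max_{m ≤ k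 ≤ n} |y(k) − y*(k)| < δ. Then, setting g_i(k) = ∂L/∂u_i(q^k, (D^0 y*_{(r)})(k), …, (D^r y*_{(0)})(k)), one has Σ_{i=0}^{r} (−1)^i · q^{i(i−1)/2} · (D^i g_i)(k) = 0 for all k with m + 2r ≤ k ≤ n. -/
/-- The higher-order nabla Lagrangian functional on the q-scale:
`𝓛[y] = Σ_{k=m+r}^{n} (q^k − q^{k−1})·L(q^k, (D⁰y_{(r)})(k), …, (Dʳy_{(0)})(k))`,
where `y_{(j)}(k) = y(k−j)`. -/
noncomputable def qNablaLagrangianFunctional (q : ℝ) (r m n : ℕ)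
    (L : ℝ → (Fin (r + 1) → ℝ) → ℝ) (y : ℕ → ℝ) : ℝ :=
  ∑ k ∈ Finset.Icc (m + r) n, (q ^ k - q ^ (k - 1)) *
    L (q ^ k) (fun i : Fin (r + 1) =>
      (qNabla q)^[(i : ℕ)] (fun k' => y (k' - (r - (i : ℕ)))) k)

/-! Perturb `y*` by `ε` times the unit impulse `δ_s` at `s = k - r`. For `i < r` the iterates
`Dⁱ δ_s` vanish outside `[s, s + i]`, so the perturbation respects the boundary conditions and the
first variation in direction `δ_s` vanishes. The `i`-th component of the jet of `δ_s` is `Dⁱ` of the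
impulse at `s + r - i`; summing by parts `i` times moves the differences onto `gᵢ`, each step
contributing a factor `-q` through the commutation rule `D (f (· + 1)) = q · (D f) (· + 1)`. What
is left is `(q^k - q^{k-1}) · Σᵢ (-1)ⁱ q^{i(i-1)/2} (Dⁱ gᵢ)(k)`. -/

open Finset Function Topology

theorem pow_sub_pow_pred_pos {q : ℝ} (hq : 1 < q) {k : ℕ} (hk : 1 ≤ k) : 0 < q ^ k - q ^ (k - 1) :=
  sub_pos.mpr (pow_lt_pow_right₀ hq (by omega))

theorem pow_succ_sub_pow_eq_mul (q : ℝ) {k : ℕ} (hk : 1 ≤ k) :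
    q ^ (k + 1) - q ^ k = q * (q ^ k - q ^ (k - 1)) := by
  obtain ⟨k, rfl⟩ : ∃ k', k = k' + 1 := ⟨k - 1, by omega⟩
  simp only [Nat.add_sub_cancel]
  ring

section QNabla

variable {q : ℝ}

noncomputable def qNablaLinearMap (q : ℝ) : Module.End ℝ (ℕ → ℝ) where
  toFun := qNabla q
  map_add' f g := by funext k; simp only [qNabla, Pi.add_apply]; ring
  map_smul' c f := by
    funext k; simp only [qNabla, Pi.smul_apply, smul_eq_mul, RingHom.id_apply]; ring

theorem qNabla_iterate_eq_pow (i : ℕ) : (qNabla q)^[i] = ⇑(qNablaLinearMap q ^ i) := by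
  rw [Module.End.coe_pow]; rfl

theorem qNabla_iterate_add (i : ℕ) (f g : ℕ → ℝ) :
    (qNabla q)^[i] (f + g) = (qNabla q)^[i] f + (qNabla q)^[i] g := by
  rw [qNabla_iterate_eq_pow, map_add]

theorem qNabla_iterate_smul (i : ℕ) (c : ℝ) (f : ℕ → ℝ) :
    (qNabla q)^[i] (c • f) = c • (qNabla q)^[i] f := by
  rw [qNabla_iterate_eq_pow, map_smul]

theorem qNabla_iterate_congr {f g : ℕ → ℝ} {i k : ℕ} (hfg : ∀ j ≤ i, f (k - j) = g (k - j)) :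
    (qNabla q)^[i] f k = (qNabla q)^[i] g k := by
  induction i generalizing f g with
  | zero => simpa using hfg 0 le_rfl
  | succ i ih =>
    rw [iterate_succ_apply, iterate_succ_apply]
    refine ih fun j hj => ?_
    simp only [qNabla]
    rw [hfg j (by omega), Nat.sub_sub, hfg (j + 1) (by omega)]

theorem qNabla_iterate_single_eq_zero {s i k : ℕ} (hk : k < s ∨ s + i < k) :
    (qNabla q)^[i] (Pi.single s 1) k = 0 := by
  calc (qNabla q)^[i] (Pi.single s 1) k = (qNabla q)^[i] 0 k :=
        qNabla_iterate_congr fun j _ => Pi.single_eq_of_ne (by omega) _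
    _ = 0 := by rw [qNabla_iterate_eq_pow, map_zero, Pi.zero_apply]

theorem qNabla_comp_succ (hq : q ≠ 0) (f : ℕ → ℝ) {k : ℕ} (hk : 1 ≤ k) :
    qNabla q (fun x => f (x + 1)) k = q * qNabla q f (k + 1) := by
  simp only [qNabla, Nat.add_sub_cancel, pow_succ_sub_pow_eq_mul q hk, Nat.sub_add_cancel hk]
  rw [← mul_div_assoc, mul_div_mul_left _ _ hq]

theorem qNabla_iterate_comp_succ (hq : q ≠ 0) (f : ℕ → ℝ) {i k : ℕ} (hik : i < k) :
    (qNabla q)^[i] (fun x => f (x + 1)) k = q ^ i * (qNabla q)^[i] f (k + 1) := by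
  induction i generalizing f with
  | zero => simp
  | succ i ih =>
    have hcomm : (qNabla q)^[i] (qNabla q fun x => f (x + 1)) k
        = (qNabla q)^[i] (q • fun x => qNabla q f (x + 1)) k :=
      qNabla_iterate_congr fun j hj => qNabla_comp_succ hq f (by omega)
    rw [iterate_succ_apply, hcomm, qNabla_iterate_smul, Pi.smul_apply, ih _ (by omega),
      iterate_succ_apply, smul_eq_mul]
    ring

end QNabla

theorem sum_Icc_mul_sub_pred_eq {R : Type*} [CommRing R] (φ E : ℕ → R) {a b : ℕ} (hab : a ≤ b)
    (ha : E (a - 1) = 0) (hb : E b = 0) :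
    ∑ k ∈ Icc a b, φ k * (E k - E (k - 1)) = ∑ k ∈ Icc a b, (φ k - φ (k + 1)) * E k := by
  have htel : ∑ k ∈ Icc a b, (φ (k + 1) * E (k + 1 - 1) - φ k * E (k - 1)) = 0 := by
    rw [sum_Icc_sub hab (fun k => φ k * E (k - 1)), Nat.add_sub_cancel, ha, hb]
    ring
  rw [← sub_eq_zero, ← sum_sub_distrib, ← htel]
  refine sum_congr rfl fun k _ => ?_
  rw [Nat.add_sub_cancel]
  ring

theorem sum_mul_qNabla_iterate_single {q : ℝ} (hq : 1 < q) (φ : ℕ → ℝ) {a b s i : ℕ} (ha : 1 ≤ a)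
    (has : a ≤ s) (hsb : s + i ≤ b) :
    ∑ k ∈ Icc a b, (q ^ k - q ^ (k - 1)) * φ k * (qNabla q)^[i] (Pi.single s 1) k
      = (-1) ^ i * q ^ (i * (i - 1) / 2) * (q ^ (s + i) - q ^ (s + i - 1)) *
          (qNabla q)^[i] φ (s + i) := by
  induction i generalizing φ with
  | zero => simp [Pi.single_apply, has, show s ≤ b by omega]
  | succ i ih =>
    set E := (qNabla q)^[i] (Pi.single s 1)
    have hE : ∀ k ∈ Icc a b, (q ^ k - q ^ (k - 1)) * φ k * (qNabla q)^[i + 1] (Pi.single s 1) k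
        = φ k * (E k - E (k - 1)) := fun k hk => by
      have := (pow_sub_pow_pred_pos hq (by grind : 1 ≤ k)).ne'
      rw [iterate_succ_apply', qNabla]
      field_simp
      rfl
    have hφ : ∀ k ∈ Icc a b, φ k - φ (k + 1)
        = (q ^ k - q ^ (k - 1)) * ((-q) • fun x => qNabla q φ (x + 1)) k := fun k hk => by
      have hk : 1 ≤ k := by grind
      have := (pow_sub_pow_pred_pos hq hk).ne'
      simp only [Pi.smul_apply, smul_eq_mul, qNabla, Nat.add_sub_cancel,
        pow_succ_sub_pow_eq_mul q hk]
      field_simp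
      ring
    calc _ = ∑ k ∈ Icc a b, φ k * (E k - E (k - 1)) := sum_congr rfl hE
      _ = ∑ k ∈ Icc a b, (φ k - φ (k + 1)) * E k :=
        sum_Icc_mul_sub_pred_eq φ E (by omega) (qNabla_iterate_single_eq_zero (by omega))
          (qNabla_iterate_single_eq_zero (by omega))
      _ = ∑ k ∈ Icc a b, (q ^ k - q ^ (k - 1)) * ((-q) • fun x => qNabla q φ (x + 1)) k * E k :=
        sum_congr rfl fun k hk => by rw [hφ k hk]
      _ = _ := by
        rw [ih _ (by omega), qNabla_iterate_smul, Pi.smul_apply,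
          qNabla_iterate_comp_succ (by positivity) _ (by omega), ← iterate_succ_apply,
          ← add_assoc, Nat.triangle_succ, Nat.add_sub_cancel, pow_succ_sub_pow_eq_mul q (by omega),
          smul_eq_mul, Nat.succ_eq_add_one]
        ring

theorem fderiv_apply_eq_sum_deriv_update {𝕜 ι : Type*} [NontriviallyNormedField 𝕜] [Fintype ι]
    [DecidableEq ι] {F : (ι → 𝕜) → 𝕜} {u : ι → 𝕜} (hF : DifferentiableAt 𝕜 F u) (v : ι → 𝕜) :
    fderiv 𝕜 F u v = ∑ i, v i * deriv (fun z => F (update u i z)) (u i) := by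
  have hpartial : ∀ i, deriv (fun z => F (update u i z)) (u i) = fderiv 𝕜 F u (Pi.single i 1) :=
    fun i => by
      have hF' : HasFDerivAt F (fderiv 𝕜 F u) (update u i (u i)) := by
        rw [update_eq_self]; exact hF.hasFDerivAt
      exact (hF'.comp_hasDerivAt (u i) (hasDerivAt_update u i (u i))).deriv
  conv_lhs => rw [← univ_sum_single v]
  simp only [map_sum, hpartial]
  refine sum_congr rfl fun i _ => ?_
  rw [← smul_eq_mul, ← map_smul, ← Pi.single_smul, smul_eq_mul, mul_one]

section Jet

variable {q : ℝ} {r : ℕ}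

noncomputable def qNablaJet (q : ℝ) (r : ℕ) (y : ℕ → ℝ) (k : ℕ) : Fin (r + 1) → ℝ :=
  fun i => (qNabla q)^[i] (fun k' => y (k' - (r - i))) k

theorem qNablaLagrangianFunctional_eq (m n : ℕ) (L : ℝ → (Fin (r + 1) → ℝ) → ℝ) (y : ℕ → ℝ) :
    qNablaLagrangianFunctional q r m n L y
      = ∑ k ∈ Icc (m + r) n, (q ^ k - q ^ (k - 1)) * L (q ^ k) (qNablaJet q r y k) :=
  rfl

theorem qNablaJet_add_smul (y η : ℕ → ℝ) (c : ℝ) (k : ℕ) :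
    qNablaJet q r (y + c • η) k = qNablaJet q r y k + c • qNablaJet q r η k := by
  funext i
  exact congrFun ((qNabla_iterate_add _ _ _).trans (congrArg _ (qNabla_iterate_smul _ _ _))) k

theorem qNablaJet_single_apply {s : ℕ} (hs : 1 ≤ s) (k : ℕ) (i : Fin (r + 1)) :
    qNablaJet q r (Pi.single s 1) k i = (qNabla q)^[i] (Pi.single (s + (r - i)) 1) k := by
  refine congrFun (congrArg _ (funext fun k' => ?_)) k
  simp only [Pi.single_apply]
  exact if_congr (by omega) rfl rfl

theorem hasDerivAt_qNablaLagrangianFunctional_add_smul {m n : ℕ}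
    {L : ℝ → (Fin (r + 1) → ℝ) → ℝ} {y : ℕ → ℝ}
    (hL : ∀ k, DifferentiableAt ℝ (L (q ^ k)) (qNablaJet q r y k)) (η : ℕ → ℝ) :
    HasDerivAt (fun ε : ℝ => qNablaLagrangianFunctional q r m n L (y + ε • η))
      (∑ k ∈ Icc (m + r) n, (q ^ k - q ^ (k - 1)) * ∑ i, qNablaJet q r η k i *
        deriv (fun z => L (q ^ k) (update (qNablaJet q r y k) i z)) (qNablaJet q r y k i)) 0 := by
  simp only [qNablaLagrangianFunctional_eq, qNablaJet_add_smul]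
  refine HasDerivAt.fun_sum fun k _ => HasDerivAt.const_mul _ ?_
  rw [← fderiv_apply_eq_sum_deriv_update (hL k)]
  have hline : HasDerivAt (fun ε : ℝ => qNablaJet q r y k + ε • qNablaJet q r η k)
      (qNablaJet q r η k) 0 := by
    simpa using
      ((hasDerivAt_id (0 : ℝ)).smul_const (qNablaJet q r η k)).const_add (qNablaJet q r y k)
  refine HasFDerivAt.comp_hasDerivAt (0 : ℝ) ?_ hline
  simpa using (hL k).hasFDerivAt

theorem sum_mul_sum_qNablaJet_single (hq : 1 < q) (G : Fin (r + 1) → ℕ → ℝ)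
    {a b s : ℕ} (ha : 1 ≤ a) (has : a ≤ s) (hsb : s + r ≤ b) :
    ∑ k ∈ Icc a b, (q ^ k - q ^ (k - 1)) * ∑ i, qNablaJet q r (Pi.single s 1) k i * G i k
      = (q ^ (s + r) - q ^ (s + r - 1)) *
          ∑ i : Fin (r + 1), (-1) ^ (i : ℕ) * q ^ ((i : ℕ) * ((i : ℕ) - 1) / 2) *
            (qNabla q)^[i] (G i) (s + r) := by
  calc _ = ∑ i : Fin (r + 1), ∑ k ∈ Icc a b,
        (q ^ k - q ^ (k - 1)) * G i k * (qNabla q)^[i] (Pi.single (s + (r - i)) 1) k := by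
        simp only [mul_sum]
        rw [sum_comm]
        refine sum_congr rfl fun i _ => sum_congr rfl fun k _ => ?_
        rw [qNablaJet_single_apply (by omega)]
        ring
    _ = _ := by
      rw [mul_sum]
      refine sum_congr rfl fun i _ => ?_
      have hi := i.is_le
      rw [sum_mul_qNabla_iterate_single hq (G i) ha (by omega) (by omega),
        show s + (r - i) + i = s + r by omega]
      ring

end Jet

theorem euler_lagrange_qscale_general (q : ℝ) (hq : 1 < q) (r : ℕ) (hr : 1 ≤ r)
    (m n : ℕ) (L : ℝ → (Fin (r + 1) → ℝ) → ℝ)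
    (hL : ∀ t : ℝ, ContDiff ℝ 1 (L t))
    (α β : ℕ → ℝ) (ystar : ℕ → ℝ)
    (hbc : ∀ i < r, (qNabla q)^[i] ystar (m + r - 1) = α i ∧
                    (qNabla q)^[i] ystar n = β i)
    (hext : ∃ δ > (0 : ℝ),
      (∀ y : ℕ → ℝ,
        (∀ i < r, (qNabla q)^[i] y (m + r - 1) = α i ∧ (qNabla q)^[i] y n = β i) →
        (∀ k : ℕ, m ≤ k → k ≤ n → |y k - ystar k| < δ) →
        qNablaLagrangianFunctional q r m n L ystar ≤
          qNablaLagrangianFunctional q r m n L y) ∨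
      (∀ y : ℕ → ℝ,
        (∀ i < r, (qNabla q)^[i] y (m + r - 1) = α i ∧ (qNabla q)^[i] y n = β i) →
        (∀ k : ℕ, m ≤ k → k ≤ n → |y k - ystar k| < δ) →
        qNablaLagrangianFunctional q r m n L y ≤
          qNablaLagrangianFunctional q r m n L ystar)) :
    ∀ k : ℕ, m + 2 * r ≤ k → k ≤ n →
      ∑ i : Fin (r + 1), (-1 : ℝ) ^ (i : ℕ) * q ^ ((i : ℕ) * ((i : ℕ) - 1) / 2) *
        (qNabla q)^[(i : ℕ)]
          (fun s => deriv
            (fun z => L (q ^ s) (Function.update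
              (fun j : Fin (r + 1) =>
                (qNabla q)^[(j : ℕ)] (fun k' => ystar (k' - (r - (j : ℕ)))) s) i z))
            ((qNabla q)^[(i : ℕ)] (fun k' => ystar (k' - (r - (i : ℕ)))) s)) k = 0 := by
  intro k hmk hkn
  obtain ⟨δ, hδ, hext⟩ := hext
  set s := k - r
  set η : ℕ → ℝ := Pi.single s 1
  have hadm : ∀ ε : ℝ, ∀ i < r, (qNabla q)^[i] (ystar + ε • η) (m + r - 1) = α i ∧
      (qNabla q)^[i] (ystar + ε • η) n = β i := by
    intro ε i hi
    have hleft : (qNabla q)^[i] η (m + r - 1) = 0 := qNabla_iterate_single_eq_zero (by omega)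
    have hright : (qNabla q)^[i] η n = 0 := qNabla_iterate_single_eq_zero (by omega)
    simpa [qNabla_iterate_add, qNabla_iterate_smul, hleft, hright] using hbc i hi
  have hnear : ∀ ε : ℝ, |ε| < δ → ∀ j, m ≤ j → j ≤ n → |(ystar + ε • η) j - ystar j| < δ := by
    intro ε hε j _ _
    have hη : |η j| ≤ 1 := by simp only [η, Pi.single_apply]; split_ifs <;> norm_num
    calc |(ystar + ε • η) j - ystar j| = |ε| * |η j| := by simp [abs_mul]
      _ ≤ |ε| := mul_le_of_le_one_right (abs_nonneg ε) hη
      _ < δ := hε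
  have hball : ∀ᶠ ε in 𝓝 (0 : ℝ), |ε| < δ :=
    (continuous_abs.tendsto' 0 0 abs_zero).eventually (eventually_lt_nhds hδ)
  have hextr :
      IsLocalExtr (fun ε : ℝ => qNablaLagrangianFunctional q r m n L (ystar + ε • η)) 0 := by
    rcases hext with hmin | hmax
    · exact Or.inl (hball.mono fun ε hε => by simpa using hmin _ (hadm ε) (hnear ε hε))
    · exact Or.inr (hball.mono fun ε hε => by simpa using hmax _ (hadm ε) (hnear ε hε))
  have hvar := hextr.hasDerivAt_eq_zero (hasDerivAt_qNablaLagrangianFunctional_add_smul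
    (fun j => (hL _).differentiable one_ne_zero _) η)
  rw [sum_mul_sum_qNablaJet_single hq _ (by omega) (by omega) (by omega),
    show s + r = k by omega] at hvar
  exact (mul_eq_zero.mp hvar).resolve_left (pow_sub_pow_pred_pos hq (by omega)).ne'

/-- The q-calculus Euler-Lagrange equation: if for each `t` the map
`(u₀,…,u_r) ↦ L(t,u₀,…,u_r)` is `C¹` and `y*` is a weak local extremum of `𝓛`
subject to the boundary conditions `(Dⁱy)(m+r−1) = αᵢ`, `(Dⁱy)(n) = βᵢ`
(`i = 0,…,r−1`), then, with `gᵢ(k) = ∂L/∂uᵢ(q^k, (D⁰y*_{(r)})(k), …, (Dʳy*_{(0)})(k))`,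
one has `Σ_{i=0}^{r} (−1)ⁱ q^{i(i−1)/2} (Dⁱgᵢ)(k) = 0` for all `m+2r ≤ k ≤ n`. -/
theorem euler_lagrange_qscale (q : ℝ) (hq : 1 < q) (r : ℕ) (hr : 1 ≤ r)
    (m n : ℕ) (hmn : m + 2 * r ≤ n) (L : ℝ → (Fin (r + 1) → ℝ) → ℝ)
    (hL : ∀ t : ℝ, ContDiff ℝ 1 (L t))
    (α β : ℕ → ℝ) (ystar : ℕ → ℝ)
    (hbc : ∀ i < r, (qNabla q)^[i] ystar (m + r - 1) = α i ∧
                    (qNabla q)^[i] ystar n = β i)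
    (hext : ∃ δ > (0 : ℝ),
      (∀ y : ℕ → ℝ,
        (∀ i < r, (qNabla q)^[i] y (m + r - 1) = α i ∧ (qNabla q)^[i] y n = β i) →
        (∀ k : ℕ, m ≤ k → k ≤ n → |y k - ystar k| < δ) →
        qNablaLagrangianFunctional q r m n L ystar ≤
          qNablaLagrangianFunctional q r m n L y) ∨
      (∀ y : ℕ → ℝ,
        (∀ i < r, (qNabla q)^[i] y (m + r - 1) = α i ∧ (qNabla q)^[i] y n = β i) →
        (∀ k : ℕ, m ≤ k → k ≤ n → |y k - ystar k| < δ) →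
        qNablaLagrangianFunctional q r m n L y ≤
          qNablaLagrangianFunctional q r m n L ystar)) :
    ∀ k : ℕ, m + 2 * r ≤ k → k ≤ n →
      ∑ i : Fin (r + 1), (-1 : ℝ) ^ (i : ℕ) * q ^ ((i : ℕ) * ((i : ℕ) - 1) / 2) *
        (qNabla q)^[(i : ℕ)]
          (fun s => deriv
            (fun z => L (q ^ s) (Function.update
              (fun j : Fin (r + 1) =>
                (qNabla q)^[(j : ℕ)] (fun k' => ystar (k' - (r - (j : ℕ)))) s) i z))
            ((qNabla q)^[(i : ℕ)] (fun k' => ystar (k' - (r - (i : ℕ)))) s)) k = 0 :=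
  euler_lagrange_qscale_general q hq r hr m n L hL α β ystar hbc hext
end

section
/- Fix a real q > 1, a natural number r ≥ 1, and m ∈ ℕ. Let η : ℕ → ℝ. If (D^i η)(m + r) = 0 for all i = 0, 1, …, r, then (D^i η)(m + i) = 0 for all i = 0, 1, …, r − 1. -/
/-- Second admissible-variations lemma on the q-scale: if `(Dⁱη)(m+r) = 0` for all
`i = 0, 1, …, r`, then `(Dⁱη)(m+i) = 0` for all `i = 0, 1, …, r−1`. -/
theorem admissible_variations_lemma_two_qscale (q : ℝ) (hq : 1 < q) (r : ℕ) (hr : 1 ≤ r)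
    (m : ℕ) (η : ℕ → ℝ)
    (h : ∀ i ≤ r, (qNabla q)^[i] η (m + r) = 0) :
    ∀ i < r, (qNabla q)^[i] η (m + i) = 0 := by
  have hd : ∀ k : ℕ, 1 ≤ k → q ^ k - q ^ (k - 1) ≠ 0 := by
    intro k hk
    have : q ^ (k - 1) < q ^ k := pow_lt_pow_right₀ hq (by omega)
    intro hc; linarith
  have key : ∀ j ≤ r, ∀ i ≤ r - j, (qNabla q)^[i] η (m + (r - j)) = 0 := by
    intro j
    induction j with
    | zero => intro _ i hi; simpa using h i (by omega)
    | succ j ih =>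
      intro hj i hi
      have h1 := ih (by omega) i (by omega)
      have h2 := ih (by omega) (i + 1) (by omega)
      rw [Function.iterate_succ_apply'] at h2
      set g := (qNabla q)^[i] η with hg
      unfold qNabla at h2
      have hk1 : 1 ≤ m + (r - j) := by omega
      rcases div_eq_zero_iff.mp h2 with hnum | hden
      · have hkk : m + (r - j) - 1 = m + (r - (j + 1)) := by omega
        rw [hkk] at hnum
        rw [h1] at hnum
        linarith
      · exact absurd hden (hd _ hk1)
  intro i hi
  have := key (r - i) (by omega) i (by omega)
  have : r - (r - i) = i := by omega
  simpa [this] using key (r - i) (by omega) i (by omega)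
end
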